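/- arXiv:2102.07722 — 2 statements merged into one kernel-verified Lean document; each statement's English description precedes it below -/
import Mathlib

section
/- Let β = (β_n) be a Cantor real base and a ∈ ℕ^ℕ with val_β(a) ≤ 1. Then a ≤_lex d_β(1), where d_β(1) is the greedy β-expansion of 1. -/
/-! The greedy algorithm keeps the invariant `x = ∑_{k ≤ n} ε_k / (β_0 ⋯ β_k) + r_n / (β_0 ⋯ β_n)`
with `0 ≤ r_n < 1`. If `a` first exceeds `d_β(x)` at place `ℓ`, its partial sum up to `ℓ` beats
this expression at `n = ℓ` by at least `(1 - r_ℓ) / (β_0 ⋯ β_ℓ) > 0`, so `val_β(a) > x`;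
for `x = 1` this contradicts `val_β(a) ≤ 1`. -/

open Filter

/-- Product of the first `n+1` terms of the base sequence. -/
noncomputable def cprod (β : ℕ → ℝ) (n : ℕ) : ℝ := ∏ i ∈ Finset.range (n+1), β i

/-- A Cantor real base: all terms exceed 1 and the partial products tend to infinity. -/
def IsCantorBase (β : ℕ → ℝ) : Prop :=
  (∀ n, 1 < β n) ∧ Tendsto (cprod β) atTop atTop

/-- Value of a real-digit sequence in a Cantor base. -/
noncomputable def valB (β : ℕ → ℝ) (a : ℕ → ℝ) : ℝ := ∑' n, a n / cprod β n

/-- Value of a natural-digit sequence in a Cantor base. -/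
noncomputable def valN (β : ℕ → ℝ) (a : ℕ → ℕ) : ℝ := valB β (fun n => (a n : ℝ))

/-- Remainders of the greedy algorithm. -/
noncomputable def greedyRem (β : ℕ → ℝ) (x : ℝ) : ℕ → ℝ
  | 0 => β 0 * x - ⌊β 0 * x⌋
  | n+1 => β (n+1) * greedyRem β x n - ⌊β (n+1) * greedyRem β x n⌋

/-- Digits of the greedy expansion. -/
noncomputable def greedy (β : ℕ → ℝ) (x : ℝ) : ℕ → ℕ
  | 0 => (⌊β 0 * x⌋).toNat
  | n+1 => (⌊β (n+1) * greedyRem β x n⌋).toNat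

/-- Remainders of the quasi-greedy algorithm started at `1`:
at each step the largest digit keeping the remainder strictly positive is chosen. -/
noncomputable def qRem (β : ℕ → ℝ) : ℕ → ℝ
  | 0 => β 0 - (⌈β 0⌉ - 1)
  | n+1 => β (n+1) * qRem β n - (⌈β (n+1) * qRem β n⌉ - 1)

/-- Digits of the quasi-greedy expansion of `1`. -/
noncomputable def quasiGreedy (β : ℕ → ℝ) : ℕ → ℕ
  | 0 => (⌈β 0⌉ - 1).toNat
  | n+1 => (⌈β (n+1) * qRem β n⌉ - 1).toNat

/-- The `n`-shifted base `β^{(n)}`. -/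
def shiftBase (β : ℕ → ℝ) (n : ℕ) : ℕ → ℝ := fun k => β (n + k)

/-- The `n`-fold shift `σ^n` of a digit sequence. -/
def shiftSeq (a : ℕ → ℕ) (n : ℕ) : ℕ → ℕ := fun k => a (n + k)

/-- Strict lexicographic order on digit sequences. -/
def LexLt (a b : ℕ → ℕ) : Prop := ∃ ℓ, (∀ k, k < ℓ → a k = b k) ∧ a ℓ < b ℓ

/-- Lexicographic order on digit sequences. -/
def LexLe (a b : ℕ → ℕ) : Prop := LexLt a b ∨ a = b

/-- The set of greedy expansions of points of `[0,1)`. -/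
def Dset (β : ℕ → ℝ) : Set (ℕ → ℕ) := {a | ∃ x ∈ Set.Ico (0:ℝ) 1, a = greedy β x}

lemma cprod_pos {β : ℕ → ℝ} (hβ : ∀ n, 0 < β n) (n : ℕ) : 0 < cprod β n :=
  Finset.prod_pos fun i _ => hβ i

lemma cprod_zero (β : ℕ → ℝ) : cprod β 0 = β 0 := by
  simp [cprod]

lemma cprod_succ (β : ℕ → ℝ) (n : ℕ) : cprod β (n + 1) = cprod β n * β (n + 1) :=
  Finset.prod_range_succ _ _

lemma greedyRem_nonneg (β : ℕ → ℝ) (x : ℝ) (n : ℕ) : 0 ≤ greedyRem β x n := by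
  cases n <;> exact sub_nonneg.mpr (Int.floor_le _)

lemma greedyRem_lt_one (β : ℕ → ℝ) (x : ℝ) (n : ℕ) : greedyRem β x n < 1 := by
  cases n <;> exact sub_lt_iff_lt_add'.mpr (Int.lt_floor_add_one _)

lemma greedy_zero_add_greedyRem_zero {β : ℕ → ℝ} {x : ℝ} (h : 0 ≤ β 0 * x) :
    (greedy β x 0 : ℝ) + greedyRem β x 0 = β 0 * x := by
  have hdigit : (greedy β x 0 : ℝ) = ⌊β 0 * x⌋ := by
    simp only [greedy]
    exact_mod_cast Int.toNat_of_nonneg (Int.floor_nonneg.mpr h)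
  rw [hdigit, greedyRem]
  ring

lemma greedy_succ_add_greedyRem_succ {β : ℕ → ℝ} (x : ℝ) (n : ℕ) (hβ : 0 ≤ β (n + 1)) :
    (greedy β x (n + 1) : ℝ) + greedyRem β x (n + 1) = β (n + 1) * greedyRem β x n := by
  have hdigit : (greedy β x (n + 1) : ℝ) = ⌊β (n + 1) * greedyRem β x n⌋ := by
    simp only [greedy]
    exact_mod_cast Int.toNat_of_nonneg
      (Int.floor_nonneg.mpr (mul_nonneg hβ (greedyRem_nonneg β x n)))
  rw [hdigit, greedyRem]
  ring

lemma sum_greedy_add_greedyRem {β : ℕ → ℝ} (hβ : ∀ n, 0 < β n) {x : ℝ} (hx : 0 ≤ x) (n : ℕ) :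
    ∑ k ∈ Finset.range (n + 1), (greedy β x k : ℝ) / cprod β k
      + greedyRem β x n / cprod β n = x := by
  induction n with
  | zero =>
    have hdigits := greedy_zero_add_greedyRem_zero (mul_nonneg (hβ 0).le hx)
    rw [Finset.sum_range_one, cprod_zero, ← add_div, hdigits, mul_div_cancel_left₀ _ (hβ 0).ne']
  | succ n ih =>
    have hdigits := greedy_succ_add_greedyRem_succ x n (hβ (n + 1)).le
    rw [Finset.sum_range_succ, add_assoc, ← add_div, hdigits, cprod_succ,
      mul_comm (cprod β n), mul_div_mul_left _ _ (hβ (n + 1)).ne', ih]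

lemma lexLt_or_lexLt_of_ne {a b : ℕ → ℕ} (h : a ≠ b) : LexLt a b ∨ LexLt b a := by
  classical
  have hex : ∃ n, a n ≠ b n := Function.ne_iff.mp h
  have hagree : ∀ k, k < Nat.find hex → a k = b k := fun k hk => not_not.mp (Nat.find_min hex hk)
  rcases (Nat.find_spec hex).lt_or_gt with hlt | hgt
  · exact Or.inl ⟨_, hagree, hlt⟩
  · exact Or.inr ⟨_, fun k hk => (hagree k hk).symm, hgt⟩

theorem lt_valN_of_lexLt_greedy {β : ℕ → ℝ} (hβ : ∀ n, 0 < β n) {x : ℝ} (hx : 0 ≤ x)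
    {a : ℕ → ℕ} (hsum : Summable (fun n => (a n : ℝ) / cprod β n))
    (hlex : LexLt (greedy β x) a) : x < valN β a := by
  obtain ⟨ℓ, hagree, hdigit⟩ := hlex
  have hdigit' : (greedy β x ℓ : ℝ) + 1 ≤ a ℓ := by exact_mod_cast hdigit
  have hP := cprod_pos hβ ℓ
  have hprefix : ∑ k ∈ Finset.range ℓ, (greedy β x k : ℝ) / cprod β k
      = ∑ k ∈ Finset.range ℓ, (a k : ℝ) / cprod β k :=
    Finset.sum_congr rfl fun k hk => by rw [hagree k (Finset.mem_range.mp hk)]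
  calc x = ∑ k ∈ Finset.range ℓ, (greedy β x k : ℝ) / cprod β k
        + (greedy β x ℓ + greedyRem β x ℓ) / cprod β ℓ := by
        rw [add_div, ← add_assoc, ← Finset.sum_range_succ, sum_greedy_add_greedyRem hβ hx ℓ]
    _ < ∑ k ∈ Finset.range ℓ, (a k : ℝ) / cprod β k + a ℓ / cprod β ℓ := by
        rw [hprefix]
        gcongr
        linarith [greedyRem_lt_one β x ℓ]
    _ = ∑ k ∈ Finset.range (ℓ + 1), (a k : ℝ) / cprod β k := (Finset.sum_range_succ _ _).symm
    _ ≤ valN β a :=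
        hsum.sum_le_tsum _ fun n _ => div_nonneg (Nat.cast_nonneg _) (cprod_pos hβ n).le

theorem stmt_9 (β : ℕ → ℝ) (hβ : IsCantorBase β) (a : ℕ → ℕ)
    (hsum : Summable (fun n => (a n : ℝ) / cprod β n)) (hval : valN β a ≤ 1) :
    LexLe a (greedy β 1) := by
  have hβpos : ∀ n, 0 < β n := fun n => one_pos.trans (hβ.1 n)
  by_cases heq : a = greedy β 1
  · exact Or.inr heq
  refine Or.inl ((lexLt_or_lexLt_of_ne heq).resolve_right fun hlex => ?_)
  exact (lt_valN_of_lexLt_greedy hβpos zero_le_one hsum hlex).not_ge hval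
end

section
/- Let β = (β_0, …, β_{p−1}) repeated periodically be an alternate base (a periodic Cantor real base of period p ≥ 1). Then the greedy β-expansion of 1 is not purely periodic: there is no q ≥ 1 such that ε_n = ε_{n+q} for all n ∈ ℕ, where (ε_n) = d_β(1). -/
open Filter

/-! If both the base and the digits of the greedy expansion of `x ≥ 1` were `Q`-periodic, the
floors in the greedy recursion `r ↦ β n * r - ⌊β n * r⌋` would cancel between steps `n` and
`n + Q`, so the gap between the remainders at these steps would be multiplied by `β n` at every
step. Starting from the gap `x - r_{Q-1} > 0` between `x` and the remainder after `Q` steps, it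
would eventually exceed `1`, although all remainders lie in `[0, 1)`. -/

open Function

/-- The number multiplied by `β n` at step `n` of the greedy algorithm: the remainder `r_{n-1}`,
with `r_{-1} = x`. -/
noncomputable def greedyOrbit (β : ℕ → ℝ) (x : ℝ) : ℕ → ℝ
  | 0 => x
  | n + 1 => greedyRem β x n

section GreedyOrbit

variable {β : ℕ → ℝ} {x : ℝ}

theorem greedyRem_eq_fract (n : ℕ) :
    greedyRem β x n = Int.fract (β n * greedyOrbit β x n) := by
  cases n <;> rfl

theorem greedy_eq_toNat_floor (n : ℕ) :
    greedy β x n = (⌊β n * greedyOrbit β x n⌋).toNat := by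
  cases n <;> rfl

theorem greedyOrbit_succ (n : ℕ) :
    greedyOrbit β x (n + 1) = β n * greedyOrbit β x n - ⌊β n * greedyOrbit β x n⌋ :=
  greedyRem_eq_fract n

theorem greedyRem_mem_Ico (n : ℕ) : greedyRem β x n ∈ Set.Ico (0 : ℝ) 1 := by
  rw [greedyRem_eq_fract]
  exact ⟨Int.fract_nonneg _, Int.fract_lt_one _⟩

theorem greedyOrbit_mem_Ico {n : ℕ} (hn : n ≠ 0) : greedyOrbit β x n ∈ Set.Ico (0 : ℝ) 1 := by
  obtain ⟨m, rfl⟩ := Nat.exists_eq_add_one_of_ne_zero hn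
  exact greedyRem_mem_Ico m

theorem greedyOrbit_nonneg (hx : 0 ≤ x) (n : ℕ) : 0 ≤ greedyOrbit β x n := by
  cases n with
  | zero => exact hx
  | succ n => exact (greedyRem_mem_Ico n).1

theorem greedy_cast_eq_floor (hβ : ∀ n, 0 ≤ β n) (hx : 0 ≤ x) (n : ℕ) :
    (greedy β x n : ℤ) = ⌊β n * greedyOrbit β x n⌋ := by
  rw [greedy_eq_toNat_floor, Int.toNat_of_nonneg]
  exact Int.floor_nonneg.mpr (mul_nonneg (hβ n) (greedyOrbit_nonneg hx n))

theorem greedyOrbit_sub_greedyOrbit_add_period (hβ : ∀ n, 0 ≤ β n) (hx : 0 ≤ x) {Q : ℕ}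
    (hβQ : Periodic β Q) (hdQ : Periodic (greedy β x) Q) (n : ℕ) :
    greedyOrbit β x n - greedyOrbit β x (n + Q) =
      (∏ i ∈ Finset.range n, β i) * (x - greedyOrbit β x Q) := by
  induction n with
  | zero => simp [greedyOrbit]
  | succ n ih =>
    have hfloor : ⌊β n * greedyOrbit β x (n + Q)⌋ = ⌊β n * greedyOrbit β x n⌋ := by
      rw [← greedy_cast_eq_floor hβ hx, ← hβQ n, ← greedy_cast_eq_floor hβ hx, hdQ n]
    rw [Nat.add_right_comm, greedyOrbit_succ, greedyOrbit_succ, hβQ n, hfloor,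
      Finset.prod_range_succ]
    linear_combination β n * ih

end GreedyOrbit

theorem not_periodic_greedy_of_one_le {β : ℕ → ℝ} (hβ : IsCantorBase β) {x : ℝ} (hx : 1 ≤ x)
    {Q : ℕ} (hQ : 0 < Q) (hβQ : Periodic β Q) : ¬ Periodic (greedy β x) Q := by
  intro hdQ
  have hgap : 0 < x - greedyOrbit β x Q := by
    linarith [(greedyOrbit_mem_Ico (β := β) (x := x) hQ.ne').2]
  obtain ⟨N, hN⟩ := (tendsto_atTop.mp hβ.2 (1 / (x - greedyOrbit β x Q))).exists
  have hgrowth := greedyOrbit_sub_greedyOrbit_add_period (fun n => zero_le_one.trans (hβ.1 n).le)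
    (zero_le_one.trans hx) hβQ hdQ (N + 1)
  rw [← cprod] at hgrowth
  have hlarge : 1 ≤ cprod β N * (x - greedyOrbit β x Q) := (div_le_iff₀ hgap).mp hN
  linarith [(greedyOrbit_mem_Ico (β := β) (x := x) N.succ_ne_zero).2,
    (greedyOrbit_mem_Ico (β := β) (x := x) (n := N + 1 + Q) (by omega)).1]

theorem stmt_18 (β : ℕ → ℝ) (hβ : IsCantorBase β) (p : ℕ) (hp : 1 ≤ p)
    (hper : ∀ n, β (n + p) = β n) :
    ¬ ∃ q : ℕ, 1 ≤ q ∧ ∀ n, greedy β 1 n = greedy β 1 (n + q) := by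
  rintro ⟨q, hq, hgq⟩
  have hbase : Periodic β p := hper
  have hdigits : Periodic (greedy β 1) q := fun n => (hgq n).symm
  refine not_periodic_greedy_of_one_le hβ le_rfl (Nat.mul_pos hq hp) (hbase.nat_mul q) ?_
  rw [Nat.mul_comm]
  exact hdigits.nat_mul p
end
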